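/- arXiv:math/0106064 — 9 statements merged into one kernel-verified Lean document; each statement's English description precedes it below -/
import Mathlib

section
/- Let Σ be a cover of X, with closed simplices and skeleta defined as usual. For elements s₀,…,sₙ ∈ Σ with nonempty intersection, define the interior ⟨s₀,…,sₙ⟩ = (⋂ᵢ₌₀ⁿ sᵢ) ∩ Σ⁽ⁿ⁾. Then each closed simplex decomposes as [s₀,…,sₙ] = ⋃ₘ₌₀ⁿ [s₀,…,ŝₘ,…,sₙ] ∪ ⟨s₀,…,sₙ⟩, where ŝₘ means sₘ is omitted. -/
/-- The set of elements of the cover containing `x`. -/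
def ordSet {X : Type*} (Sig : Set (Set X)) (x : X) : Set (Set X) :=
  {s ∈ Sig | x ∈ s}

/-- The `n`-skeleton of a cover: points of order at most `n+1`. -/
def skeleton {X : Type*} (Sig : Set (Set X)) (n : ℕ) : Set X :=
  {x | (ordSet Sig x).Finite ∧ (ordSet Sig x).ncard ≤ n + 1}

/-- The closed simplex on a family of elements of the cover. -/
def closedSimplex {X : Type*} (Sig : Set (Set X)) {k : ℕ} (s : Fin k → Set X) : Set X :=
  (⋃ i, s i) \ ⋃₀ {t ∈ Sig | ∀ i, t ≠ s i}

/-- The interior of the simplex on `s₀, …, sₙ` (a family of `n+1` sets). -/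
def simplexInterior {X : Type*} (Sig : Set (Set X)) {n : ℕ} (s : Fin (n + 1) → Set X) : Set X :=
  (⋂ i, s i) ∩ skeleton Sig n

theorem closedSimplex_eq_union_faces_interior {X : Type*} (Sig : Set (Set X))
    (hcov : ⋃₀ Sig = Set.univ) (n : ℕ) (s : Fin (n + 1) → Set X)
    (hmem : ∀ i, s i ∈ Sig) (hinj : Function.Injective s)
    (hne : (⋂ i, s i).Nonempty) :
    closedSimplex Sig s =
      (⋃ m : Fin (n + 1), closedSimplex Sig (fun i : Fin n => s (m.succAbove i))) ∪
        simplexInterior Sig s := by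
  have hrange : (Set.range s).ncard = n + 1 := by
    rw [← Set.image_univ, Set.ncard_image_of_injective _ hinj, Set.ncard_univ,
      Nat.card_eq_fintype_card, Fintype.card_fin]
  ext x
  constructor
  · rintro ⟨hx1, hx2⟩
    have hsub : ordSet Sig x ⊆ Set.range s := by
      rintro t ⟨htS, hxt⟩
      by_contra ht
      exact hx2 ⟨t, ⟨htS, fun i hi => ht ⟨i, hi.symm⟩⟩, hxt⟩
    by_cases hall : ∀ i, x ∈ s i
    · right
      have heq : ordSet Sig x = Set.range s := by
        refine hsub.antisymm ?_
        rintro t ⟨i, rfl⟩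
        exact ⟨hmem i, hall i⟩
      exact ⟨Set.mem_iInter.2 hall, by rw [heq]; exact (Set.finite_range s),
        by rw [heq, hrange]⟩
    · left
      push_neg at hall
      obtain ⟨m, hm⟩ := hall
      refine Set.mem_iUnion.2 ⟨m, ?_, ?_⟩
      · obtain ⟨j, hj⟩ := Set.mem_iUnion.1 hx1
        have hjm : j ≠ m := fun h => hm (h ▸ hj)
        obtain ⟨i, hi⟩ := Fin.exists_succAbove_eq hjm
        exact Set.mem_iUnion.2 ⟨i, by simpa [hi] using hj⟩
      · rintro ⟨t, ⟨htS, ht⟩, hxt⟩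
        rcases hsub ⟨htS, hxt⟩ with ⟨j, rfl⟩
        rcases eq_or_ne j m with rfl | hjm
        · exact hm hxt
        · obtain ⟨i, hi⟩ := Fin.exists_succAbove_eq hjm
          exact ht i (by simp [hi])
  · rintro (hx | hx)
    · obtain ⟨m, hm1, hm2⟩ := Set.mem_iUnion.1 hx
      refine ⟨?_, ?_⟩
      · obtain ⟨i, hi⟩ := Set.mem_iUnion.1 hm1
        exact Set.mem_iUnion.2 ⟨m.succAbove i, hi⟩
      · rintro ⟨t, ⟨htS, ht⟩, hxt⟩
        exact hm2 ⟨t, ⟨htS, fun i => ht (m.succAbove i)⟩, hxt⟩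
    · obtain ⟨hx1, hfin, hcard⟩ := hx
      have hall : ∀ i, x ∈ s i := Set.mem_iInter.1 hx1
      refine ⟨Set.mem_iUnion.2 ⟨0, hall 0⟩, ?_⟩
      rintro ⟨t, ⟨htS, ht⟩, hxt⟩
      have hsub : insert t (Set.range s) ⊆ ordSet Sig x := by
        rintro u (rfl | ⟨i, rfl⟩)
        · exact ⟨htS, hxt⟩
        · exact ⟨hmem i, hall i⟩
      have htn : t ∉ Set.range s := fun ⟨i, hi⟩ => ht i hi.symm
      have : (insert t (Set.range s)).ncard ≤ n + 1 :=
        le_trans (Set.ncard_le_ncard hsub hfin) hcard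
      rw [Set.ncard_insert_of_notMem htn (Set.finite_range s), hrange] at this
      omega
end

section
/- Let (Y, d) be a metric space, X a topological space, ω an open cover of X, and δ : X → ℝ a positive continuous function which varies within each element of ω by less than a factor of two (i.e. sup_{x∈W} δ(x) < 2·inf_{x∈W} δ(x) for every W ∈ ω). Let ω×δ be the cover of X×Y by sets W × B(y, δ(x)) with x ∈ W ∈ ω and y ∈ Y. Then for any points p₀ = (x₀,y₀) and p = (x,y) ∈ St(p₀, ω×δ), the star St(p₀, ω×δ) is contained in St(x₀, ω) × B(y, 16·δ(x)). -/
/-- The star of a point with respect to a cover. -/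
def star' {Z : Type*} (z : Z) (γ : Set (Set Z)) : Set Z :=
  ⋃₀ {U ∈ γ | z ∈ U}

/-- The cover `ω × δ` of `X × Y` by sets `W ×ˢ B(y, δ x)` with `x ∈ W ∈ ω`, `y ∈ Y`. -/
def prodCover {X Y : Type*} [MetricSpace Y] (ω : Set (Set X)) (δ : X → ℝ) :
    Set (Set (X × Y)) :=
  {S | ∃ W ∈ ω, ∃ x ∈ W, ∃ y : Y, S = W ×ˢ Metric.ball y (δ x)}

theorem star_subset_prod {X Y : Type*} [TopologicalSpace X] [MetricSpace Y]
    (ω : Set (Set X)) (hω : ∀ W ∈ ω, IsOpen W) (hcov : ⋃₀ ω = Set.univ)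
    (δ : X → ℝ) (hδcont : Continuous δ) (hδpos : ∀ x, 0 < δ x)
    (hvar : ∀ W ∈ ω, ∀ x ∈ W, ∀ x' ∈ W, δ x < 2 * δ x')
    (x₀ x : X) (y₀ y : Y)
    (hp : (x, y) ∈ star' (x₀, y₀) (prodCover ω δ)) :
    star' (x₀, y₀) (prodCover ω δ) ⊆
      (star' x₀ ω) ×ˢ Metric.ball y (16 * δ x) := by
  obtain ⟨S₁, ⟨⟨W₁, hW₁, x₁, hx₁, y₁, rfl⟩, hp₀S₁⟩, hpS₁⟩ := hp
  obtain ⟨hx₀W₁, hy₀⟩ := hp₀S₁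
  obtain ⟨hxW₁, hy⟩ := hpS₁
  rintro ⟨x', y'⟩ ⟨S₂, ⟨⟨W₂, hW₂, x₂, hx₂, y₂, rfl⟩, hp₀S₂⟩, hp'S₂⟩
  obtain ⟨hx₀W₂, hy₀'⟩ := hp₀S₂
  obtain ⟨hx'W₂, hy'⟩ := hp'S₂
  constructor
  · exact ⟨W₂, ⟨hW₂, hx₀W₂⟩, hx'W₂⟩
  · simp only [Metric.mem_ball] at *
    have h1 : δ x₁ < 2 * δ x := hvar W₁ hW₁ x₁ hx₁ x hxW₁
    have h0 : δ x₀ < 2 * δ x := hvar W₁ hW₁ x₀ hx₀W₁ x hxW₁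
    have h2 : δ x₂ < 2 * δ x₀ := hvar W₂ hW₂ x₂ hx₂ x₀ hx₀W₂
    have := dist_triangle4 y' y₂ y₀ y
    have d1 : dist y₂ y₀ < δ x₂ := by rw [dist_comm]; exact hy₀'
    have d2 : dist y₀ y₁ < δ x₁ := hy₀
    have d3 : dist y₁ y < δ x₁ := by rw [dist_comm]; exact hy
    have := dist_triangle y₀ y₁ y
    calc dist y' y ≤ dist y' y₂ + dist y₂ y₀ + dist y₀ y := dist_triangle4 y' y₂ y₀ y
      _ ≤ dist y' y₂ + dist y₂ y₀ + (dist y₀ y₁ + dist y₁ y) := by linarith [dist_triangle y₀ y₁ y]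
      _ < 16 * δ x := by linarith [hδpos x]
end

section
/- For any open cover γ of the graph Γ_H ⊆ X×Y of a compact-valued upper semicontinuous mapping H from a paracompact space X to a metric space Y, there exist an open cover ω of X and a continuous positive function ε : X → ℝ such that every set of the form W × B(y, ε(x)), with x ∈ W ∈ ω and y ∈ H(x), is contained in some element of γ; in particular the family of such sets is an open cover of Γ_H refining γ. -/
theorem rectangular_cover_of_graph {X Y : Type*} [TopologicalSpace X]
    [ParacompactSpace X] [T2Space X] [MetricSpace Y]
    (H : X → Set Y) (hcpt : ∀ x, IsCompact (H x)) (hne : ∀ x, (H x).Nonempty)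
    (husc : ∀ x, ∀ V : Set Y, IsOpen V → H x ⊆ V →
      ∃ O ∈ nhds x, ∀ x' ∈ O, H x' ⊆ V)
    (γ : Set (Set (X × Y))) (hγopen : ∀ G ∈ γ, IsOpen G)
    (hγcov : {p : X × Y | p.2 ∈ H p.1} ⊆ ⋃₀ γ) :
    ∃ ω : Set (Set X), (∀ W ∈ ω, IsOpen W) ∧ ⋃₀ ω = Set.univ ∧
      ∃ ε : X → ℝ, Continuous ε ∧ (∀ x, 0 < ε x) ∧
        ∀ W ∈ ω, ∀ x ∈ W, ∀ y ∈ H x, ∃ G ∈ γ, W ×ˢ Metric.ball y (ε x) ⊆ G := by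
  -- Step 1: local rectangular data around each point a
  have step1 : ∀ a : X, ∃ (U : Set X) (δ : ℝ), IsOpen U ∧ a ∈ U ∧ 0 < δ ∧
      ∀ x ∈ U, ∀ y ∈ H x, ∃ G ∈ γ, U ×ˢ Metric.ball y δ ⊆ G := by
    intro a
    have key : ∀ y ∈ H a, ∃ (u : Set X) (r : ℝ), IsOpen u ∧ a ∈ u ∧ 0 < r ∧
        ∃ G ∈ γ, u ×ˢ Metric.ball y (3 * r) ⊆ G := by
      intro y hy
      obtain ⟨G, hGγ, hGmem⟩ := hγcov (show ((a, y) : X × Y).2 ∈ H (a, y).1 from hy)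
      obtain ⟨u, v, hu, hv, hau, hyv, huv⟩ := (isOpen_prod_iff.1 (hγopen G hGγ)) a y hGmem
      obtain ⟨r, hr, hball⟩ := Metric.isOpen_iff.1 hv y hyv
      refine ⟨u, r / 3, hu, hau, by linarith, G, hGγ, ?_⟩
      refine Set.Subset.trans ?_ huv
      apply Set.prod_mono_right
      refine Set.Subset.trans ?_ hball
      apply Metric.ball_subset_ball
      linarith
    choose! u r hu hau hr hG using key
    obtain ⟨t, htH, htcov⟩ := (hcpt a).elim_nhds_subcover (fun y => Metric.ball y (r y))
      (fun y hy => Metric.ball_mem_nhds y (hr y hy))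
    obtain ⟨z, hz⟩ := hne a
    obtain ⟨y₀, hy₀t, -⟩ := Set.mem_iUnion₂.1 (htcov hz)
    have htne : t.Nonempty := ⟨y₀, hy₀t⟩
    set V : Set Y := ⋃ y ∈ t, Metric.ball y (r y) with hV
    have hVopen : IsOpen V := isOpen_biUnion fun y _ => Metric.isOpen_ball
    obtain ⟨O, hO, hOV⟩ := husc a V hVopen htcov
    set U : Set X := interior O ∩ ⋂ y ∈ t, u y with hUdef
    set δ : ℝ := t.inf' htne r with hδdef
    have hδpos : 0 < δ := by
      rw [hδdef, Finset.lt_inf'_iff]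
      exact fun y hy => hr y (htH y hy)
    refine ⟨U, δ, ?_, ?_, hδpos, ?_⟩
    · exact isOpen_interior.inter (isOpen_biInter_finset fun y hy => hu y (htH y hy))
    · exact ⟨mem_interior_iff_mem_nhds.2 hO, Set.mem_iInter₂.2 fun y hy => hau y (htH y hy)⟩
    · intro x hx z hz'
      have hxO : x ∈ interior O := hx.1
      have hzV : z ∈ V := hOV x (interior_subset hxO) hz'
      obtain ⟨y, hyt, hzy⟩ := Set.mem_iUnion₂.1 hzV
      have hyH : y ∈ H a := htH y hyt
      obtain ⟨G, hGγ, hGsub⟩ := hG y hyH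
      refine ⟨G, hGγ, Set.Subset.trans ?_ hGsub⟩
      apply Set.prod_mono
      · exact Set.Subset.trans Set.inter_subset_right (Set.biInter_subset_of_mem hyt)
      · intro w hw
        have h1 : dist w z < δ := hw
        have h2 : dist z y < r y := hzy
        have hδle : δ ≤ r y := Finset.inf'_le r hyt
        have : dist w y ≤ dist w z + dist z y := dist_triangle w z y
        exact lt_of_le_of_lt this (by linarith [hr y hyH]) |>.trans_le le_rfl
  choose U δ hUo hamem hδ hkey using step1
  -- Step 2: partition of unity subordinate to U
  obtain ⟨f, hf⟩ := PartitionOfUnity.exists_isSubordinate (s := Set.univ) isClosed_univ U hUo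
    (fun x _ => Set.mem_iUnion.2 ⟨x, hamem x⟩)
  set ε : X → ℝ := fun x => ∑ᶠ a, f a x * (δ a / 2) with hεdef
  have hεcont : Continuous ε := by
    apply continuous_finsum (fun a => ((f a).continuous.mul continuous_const))
    exact f.locallyFinite.subset fun a => Function.support_mul_subset_left _ _
  -- the finite active set at each point
  have hsum1 : ∀ x : X, ∑ᶠ a, f a x = 1 := fun x => f.sum_eq_one (Set.mem_univ x)
  have hfin : ∀ x : X, (Function.support fun a => f a x).Finite := by
    intro x
    exact (f.locallyFinite.point_finite x).subset fun a ha => ha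
  have hεsum : ∀ x : X, ε x = ∑ a ∈ (hfin x).toFinset, f a x * (δ a / 2) := by
    intro x
    apply finsum_eq_sum_of_support_subset
    intro a ha
    have h1 : f a x ≠ 0 := by
      intro h
      apply ha
      simp [Function.mem_support, h]
    simpa [Function.mem_support] using h1
  have hsum1' : ∀ x : X, ∑ a ∈ (hfin x).toFinset, f a x = 1 := by
    intro x
    rw [← hsum1 x]
    exact (finsum_eq_sum_of_support_subset _ (by simp)).symm
  have hactne : ∀ x : X, (hfin x).toFinset.Nonempty := by
    intro x
    by_contra h
    rw [Finset.not_nonempty_iff_eq_empty] at h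
    have := hsum1' x
    rw [h, Finset.sum_empty] at this
    norm_num at this
  -- choose, for each x, an active index maximizing δ
  have hex : ∀ x : X, ∃ a, f a x ≠ 0 ∧ ∀ b, f b x ≠ 0 → δ b ≤ δ a := by
    intro x
    obtain ⟨a, ha, hmax⟩ := Finset.exists_max_image (hfin x).toFinset δ (hactne x)
    refine ⟨a, by simpa using ha, fun b hb => hmax b (by simpa using hb)⟩
  choose A hA hAmax using hex
  have hεle : ∀ x : X, ε x ≤ δ (A x) / 2 := by
    intro x
    rw [hεsum x]
    calc ∑ a ∈ (hfin x).toFinset, f a x * (δ a / 2)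
        ≤ ∑ a ∈ (hfin x).toFinset, f a x * (δ (A x) / 2) := by
          apply Finset.sum_le_sum
          intro a ha
          have haact : f a x ≠ 0 := by simpa using ha
          exact mul_le_mul_of_nonneg_left (by linarith [hAmax x a haact]) (f.nonneg a x)
      _ = (∑ a ∈ (hfin x).toFinset, f a x) * (δ (A x) / 2) := by rw [Finset.sum_mul]
      _ = δ (A x) / 2 := by rw [hsum1' x, one_mul]
  have hεpos : ∀ x : X, 0 < ε x := by
    intro x
    rw [hεsum x]
    apply Finset.sum_pos'
    · intro a _
      exact mul_nonneg (f.nonneg a x) (by linarith [hδ a])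
    · refine ⟨A x, by simpa using hA x, ?_⟩
      have : 0 < f (A x) x := lt_of_le_of_ne (f.nonneg (A x) x) (Ne.symm (hA x))
      exact mul_pos this (by linarith [hδ (A x)])
  -- the cover ω
  set W : X → Set X := fun x₀ => {x' | f (A x₀) x' ≠ 0} ∩ {x' | ε x' < δ (A x₀)} with hWdef
  have hWopen : ∀ x₀, IsOpen (W x₀) := by
    intro x₀
    apply IsOpen.inter
    · exact isOpen_compl_singleton.preimage (f (A x₀)).continuous
    · exact isOpen_Iio.preimage hεcont
  have hWmem : ∀ x₀, x₀ ∈ W x₀ := by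
    intro x₀
    exact ⟨hA x₀, lt_of_le_of_lt (hεle x₀) (by linarith [hδ (A x₀)])⟩
  have hWU : ∀ x₀, W x₀ ⊆ U (A x₀) := by
    intro x₀ x' hx'
    exact hf (A x₀) (subset_tsupport _ hx'.1)
  refine ⟨Set.range W, ?_, ?_, ε, hεcont, hεpos, ?_⟩
  · rintro _ ⟨x₀, rfl⟩
    exact hWopen x₀
  · apply Set.eq_univ_of_forall
    intro x
    exact ⟨W x, Set.mem_range_self x, hWmem x⟩
  · rintro _ ⟨x₀, rfl⟩ x hx y hy
    obtain ⟨G, hGγ, hGsub⟩ := hkey (A x₀) x (hWU x₀ hx) y hy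
    refine ⟨G, hGγ, Set.Subset.trans ?_ hGsub⟩
    exact Set.prod_mono (hWU x₀) (Metric.ball_subset_ball (le_of_lt hx.2))
end

section
/- Let F : X → Y be an upper semicontinuous compact-valued mapping and Φ : X → Y a lower semicontinuous multivalued mapping (metric codomain Y), and let ω be an open cover of Y. Then the mapping G(x) = Φ(x) ∩ st(F(x), ω), where st(F(x),ω) = ⋃{U ∈ ω : F(x) ⊆ U}, is lower semicontinuous on the set where it has nonempty values. -/
/-- The small star of a set `A` with respect to a cover `ω`. -/
def smallStar {Y : Type*} (A : Set Y) (ω : Set (Set Y)) : Set Y :=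
  ⋃₀ {U ∈ ω | A ⊆ U}

theorem starTrace_lowerSemicontinuous {X Y : Type*} [TopologicalSpace X] [MetricSpace Y]
    (F Φ : X → Set Y) (hcpt : ∀ x, IsCompact (F x))
    (husc : ∀ x, ∀ V : Set Y, IsOpen V → F x ⊆ V →
      ∃ O ∈ nhds x, ∀ x' ∈ O, F x' ⊆ V)
    (hlsc : ∀ x, ∀ y ∈ Φ x, ∀ ε : ℝ, 0 < ε →
      ∃ O ∈ nhds x, ∀ x' ∈ O, (Φ x' ∩ Metric.ball y ε).Nonempty)
    (ω : Set (Set Y)) (hωopen : ∀ U ∈ ω, IsOpen U) (hωcov : ⋃₀ ω = Set.univ) :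
    ∀ x, ∀ y ∈ Φ x ∩ smallStar (F x) ω, ∀ ε : ℝ, 0 < ε →
      ∃ O ∈ nhds x, ∀ x' ∈ O,
        ((Φ x' ∩ smallStar (F x') ω) ∩ Metric.ball y ε).Nonempty := by
  intro x y hy ε hε
  obtain ⟨hyΦ, U, ⟨hUω, hFU⟩, hyU⟩ := hy
  have hUopen := hωopen U hUω
  obtain ⟨δ, hδ, hball⟩ := Metric.isOpen_iff.mp hUopen y hyU
  obtain ⟨O₁, hO₁, hO₁F⟩ := husc x U hUopen hFU
  obtain ⟨O₂, hO₂, hO₂Φ⟩ := hlsc x y hyΦ (min ε δ) (lt_min hε hδ)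
  refine ⟨O₁ ∩ O₂, Filter.inter_mem hO₁ hO₂, ?_⟩
  rintro x' ⟨hx'1, hx'2⟩
  obtain ⟨z, hzΦ, hzb⟩ := hO₂Φ x' hx'2
  have hzb' : z ∈ Metric.ball y (min ε δ) := hzb
  rw [Metric.mem_ball] at hzb'
  refine ⟨z, ⟨hzΦ, U, ⟨hUω, hO₁F x' hx'1⟩, hball ?_⟩, ?_⟩
  · exact Metric.mem_ball.mpr (lt_of_lt_of_le hzb' (min_le_right _ _))
  · exact Metric.mem_ball.mpr (lt_of_lt_of_le hzb' (min_le_left _ _))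
end

section
/- Let X be a metric space and K ⊆ X a compact set. Define UV-exp(K, X) to be the set of compact sets M with K ⊆ M ⊆ X such that for every open U ⊇ M there exists an open V with K ⊆ V ⊆ U satisfying a fixed hereditary connectivity property α(V,U) which is monotone (if V' ⊆ V, α(V,U) implies α(V',U); if U ⊆ U', α(V,U) implies α(V,U')). Then UV-exp(K,X) is closed in the hyperspace exp(K,X) = {M compact : K ⊆ M ⊆ X} with the Hausdorff metric. -/
open TopologicalSpace

theorem UVexp_isClosed {X : Type*} [MetricSpace X] (K : Set X) (hK : IsCompact K)
    (α : Set X → Set X → Prop)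
    (hmono₁ : ∀ V' V U : Set X, V' ⊆ V → α V U → α V' U)
    (hmono₂ : ∀ V U U' : Set X, U ⊆ U' → α V U → α V U') :
    IsClosed {M : NonemptyCompacts X | K ⊆ (M : Set X) ∧
      ∀ U : Set X, IsOpen U → (M : Set X) ⊆ U →
        ∃ V : Set X, IsOpen V ∧ K ⊆ V ∧ V ⊆ U ∧ α V U} := by
  rw [← isOpen_compl_iff]
  -- Instead, show closure ⊆ set
  rw [isOpen_compl_iff, ← closure_subset_iff_isClosed]
  intro M hM
  have key : ∀ U : Set X, IsOpen U → (M : Set X) ⊆ U →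
      ∃ N : NonemptyCompacts X, (K ⊆ (N : Set X) ∧
        ∀ U' : Set X, IsOpen U' → (N : Set X) ⊆ U' →
          ∃ V : Set X, IsOpen V ∧ K ⊆ V ∧ V ⊆ U' ∧ α V U') ∧ (N : Set X) ⊆ U := by
    intro U hU hMU
    obtain ⟨ε, hε, hthick⟩ := M.isCompact.exists_thickening_subset_open hU hMU
    obtain ⟨N, hN, hdist⟩ := Metric.mem_closure_iff.1 hM ε hε
    refine ⟨N, hN, ?_⟩
    intro x hx
    have hfin : EMetric.hausdorffEdist (N : Set X) (M : Set X) ≠ ⊤ :=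
      Metric.hausdorffEdist_ne_top_of_nonempty_of_bounded N.nonempty M.nonempty
        N.isCompact.isBounded M.isCompact.isBounded
    have : Metric.hausdorffDist (N : Set X) (M : Set X) < ε := by
      rw [dist_comm] at hdist
      simpa [Metric.NonemptyCompacts.dist_eq] using hdist
    obtain ⟨y, hy, hxy⟩ := Metric.exists_dist_lt_of_hausdorffDist_lt hx this hfin
    exact hthick (Metric.mem_thickening_iff.2 ⟨y, hy, hxy⟩)
  constructor
  · -- K ⊆ M
    intro x hx
    rw [← M.isCompact.isClosed.closure_eq]
    apply Metric.mem_closure_iff.2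
    intro ε hε
    obtain ⟨N, hN, hdist⟩ := Metric.mem_closure_iff.1 hM ε hε
    have hfin : EMetric.hausdorffEdist (N : Set X) (M : Set X) ≠ ⊤ :=
      Metric.hausdorffEdist_ne_top_of_nonempty_of_bounded N.nonempty M.nonempty
        N.isCompact.isBounded M.isCompact.isBounded
    have hd : Metric.hausdorffDist (N : Set X) (M : Set X) < ε := by
      rw [dist_comm] at hdist
      simpa [Metric.NonemptyCompacts.dist_eq] using hdist
    obtain ⟨y, hy, hxy⟩ := Metric.exists_dist_lt_of_hausdorffDist_lt (hN.1 hx) hd hfin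
    exact ⟨y, hy, hxy⟩
  · intro U hU hMU
    obtain ⟨N, hN, hNU⟩ := key U hU hMU
    exact hN.2 U hU hNU
end

section
/- Let α be a proper ordering on subsets of a metric space Y, let X be a topological space, and let F : X → 2^Y be lower α-continuous. Fix x ∈ X and y ∈ F(x). Then for any ε > 0 there exist δ > 0 and neighbourhoods O_y of y in Y and O_x of x in X such that for any x' ∈ O_x and any y' ∈ F(x') ∩ O_y one has (B(y',δ) ∩ F(x')) α (B(y',ε) ∩ F(x')). -/
theorem lower_alpha_continuity_at_point {X Y : Type*} [TopologicalSpace X] [MetricSpace Y]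
    (α : Set Y → Set Y → Prop)
    (hα₁ : ∀ W V : Set Y, α W V → W ⊆ V)
    (hα₂ : ∀ W V R : Set Y, W ⊆ V → α V R → α W R)
    (hα₃ : ∀ W V R : Set Y, α W V → V ⊆ R → α W R)
    (F : X → Set Y)
    (hF : ∀ x : X, ∀ y ∈ F x, ∀ V ∈ nhds y, ∃ W ∈ nhds y, ∃ U ∈ nhds x,
      ∀ x' ∈ U, α (W ∩ F x') (V ∩ F x'))
    (x : X) (y : Y) (hy : y ∈ F x) (ε : ℝ) (hε : 0 < ε) :
    ∃ δ : ℝ, 0 < δ ∧ ∃ Oy ∈ nhds y, ∃ Ox ∈ nhds x,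
      ∀ x' ∈ Ox, ∀ y' ∈ F x' ∩ Oy,
        α (Metric.ball y' δ ∩ F x') (Metric.ball y' ε ∩ F x') := by
  obtain ⟨W, hW, U, hU, hWU⟩ := hF x y hy (Metric.ball y (ε / 2))
    (Metric.ball_mem_nhds y (by linarith))
  obtain ⟨r, hr, hrW⟩ := Metric.mem_nhds_iff.mp hW
  refine ⟨r / 2, by positivity, Metric.ball y (min (r / 2) (ε / 2)), ?_, U, hU, ?_⟩
  · exact Metric.ball_mem_nhds y (by positivity)
  · rintro x' hx' y' ⟨hy'F, hy'b⟩
    have hd : dist y' y < min (r / 2) (ε / 2) := Metric.mem_ball.mp hy'b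
    have h1 : Metric.ball y' (r / 2) ⊆ W := by
      refine subset_trans ?_ hrW
      intro z hz
      have := Metric.mem_ball.mp hz
      have := dist_triangle z y' y
      simp only [Metric.mem_ball]
      have := lt_min_iff.mp hd
      linarith
    have h2 : Metric.ball y (ε / 2) ⊆ Metric.ball y' ε := by
      intro z hz
      have := Metric.mem_ball.mp hz
      have := dist_triangle z y y'
      have hd' : dist y y' < ε / 2 := by
        rw [dist_comm]; exact lt_of_lt_of_le hd (min_le_right _ _)
      simp only [Metric.mem_ball]
      linarith
    exact hα₃ _ _ _ (hα₂ _ _ _ (Set.inter_subset_inter_left _ h1) (hWU x' hx'))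
      (Set.inter_subset_inter_left _ h2)
end

section
/- Let α be a proper ordering on subsets of a metric space Y, X a topological space, F : X → 2^Y lower α-continuous, and K a compact subset of F(x) for some x ∈ X. Then for any ε > 0 there exist δ > 0, a neighbourhood OK of K in Y, and a neighbourhood O_x of x in X such that for all x' ∈ O_x and y' ∈ F(x') ∩ OK one has (B(y',δ) ∩ F(x')) α (B(y',ε) ∩ F(x')). -/
theorem lower_alpha_continuity_at_compactum {X Y : Type*} [TopologicalSpace X] [MetricSpace Y]
    (α : Set Y → Set Y → Prop)
    (hα₁ : ∀ W V : Set Y, α W V → W ⊆ V)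
    (hα₂ : ∀ W V R : Set Y, W ⊆ V → α V R → α W R)
    (hα₃ : ∀ W V R : Set Y, α W V → V ⊆ R → α W R)
    (F : X → Set Y)
    (hF : ∀ x : X, ∀ y ∈ F x, ∀ V ∈ nhds y, ∃ W ∈ nhds y, ∃ U ∈ nhds x,
      ∀ x' ∈ U, α (W ∩ F x') (V ∩ F x'))
    (x : X) (K : Set Y) (hKc : IsCompact K) (hK : K ⊆ F x) (ε : ℝ) (hε : 0 < ε) :
    ∃ δ : ℝ, 0 < δ ∧ ∃ OK : Set Y, IsOpen OK ∧ K ⊆ OK ∧ ∃ Ox ∈ nhds x,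
      ∀ x' ∈ Ox, ∀ y' ∈ F x' ∩ OK,
        α (Metric.ball y' δ ∩ F x') (Metric.ball y' ε ∩ F x') := by
  rcases K.eq_empty_or_nonempty with hKe | hKne
  · refine ⟨ε, hε, ∅, isOpen_empty, by simp [hKe], Set.univ, Filter.univ_mem, ?_⟩
    intro x' _ y' hy'
    exact absurd hy'.2 (Set.notMem_empty y')
  have key : ∀ y : Y, ∃ r : ℝ, 0 < r ∧ r ≤ ε / 2 ∧ ∃ U ∈ nhds x,
      ∀ _ : y ∈ K, ∀ x' ∈ U,
        α (Metric.ball y (2 * r) ∩ F x') (Metric.ball y (ε / 2) ∩ F x') := by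
    intro y
    by_cases hy : y ∈ K
    · obtain ⟨W, hW, U, hU, hWU⟩ := hF x y (hK hy) (Metric.ball y (ε / 2))
        (Metric.ball_mem_nhds y (by linarith))
      obtain ⟨t, ht0, htW⟩ := Metric.mem_nhds_iff.mp hW
      refine ⟨min (t / 2) (ε / 2), by positivity, min_le_right _ _, U, hU, fun _ x' hx' => ?_⟩
      refine hα₂ _ _ _ ?_ (hWU x' hx')
      refine Set.inter_subset_inter_left _ (le_trans (Metric.ball_subset_ball ?_) htW)
      have := min_le_left (t / 2) (ε / 2)
      linarith
    · exact ⟨ε / 2, by linarith, le_refl _, Set.univ, Filter.univ_mem, fun hy' => absurd hy' hy⟩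
  choose r hr hrε U hUx hkey using key
  obtain ⟨t, htK, hcov⟩ := hKc.elim_nhds_subcover (fun y => Metric.ball y (r y))
    (fun y _ => Metric.ball_mem_nhds y (hr y))
  have htne : t.Nonempty := by
    obtain ⟨y0, hy0⟩ := hKne
    have := hcov hy0
    simp only [Set.mem_iUnion] at this
    obtain ⟨i, hi, _⟩ := this
    exact ⟨i, hi⟩
  refine ⟨t.inf' htne r, ?_, ⋃ y ∈ t, Metric.ball y (r y),
    isOpen_biUnion fun _ _ => Metric.isOpen_ball, hcov, ⋂ y ∈ t, U y,
    (Filter.biInter_finset_mem t).mpr fun y _ => hUx y, ?_⟩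
  · obtain ⟨j, hj, hjle⟩ := t.exists_mem_eq_inf' htne r
    rw [hjle]; exact hr j
  intro x' hx' y' hy'
  obtain ⟨hy'F, hy'OK⟩ := hy'
  simp only [Set.mem_iUnion] at hy'OK
  obtain ⟨i, hi, hyi⟩ := hy'OK
  have hx'i : x' ∈ U i := by
    simp only [Set.mem_iInter] at hx'
    exact hx' i hi
  have hδi : t.inf' htne r ≤ r i := Finset.inf'_le r hi
  have h1 : Metric.ball y' (t.inf' htne r) ⊆ Metric.ball i (2 * r i) := by
    intro z hz
    rw [Metric.mem_ball] at *
    calc dist z i ≤ dist z y' + dist y' i := dist_triangle _ _ _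
      _ < 2 * r i := by linarith
  have h2 : Metric.ball i (ε / 2) ⊆ Metric.ball y' ε := by
    intro z hz
    rw [Metric.mem_ball] at *
    have : dist z y' ≤ dist z i + dist i y' := dist_triangle _ _ _
    rw [dist_comm i y'] at this
    have := hrε i
    linarith
  exact hα₃ _ _ _
    (hα₂ _ _ _ (Set.inter_subset_inter_left _ h1) (hkey i (htK i hi) x' hx'i))
    (Set.inter_subset_inter_left _ h2)
end

section
/- Let α be a proper ordering on subsets of a metric space Y, X a paracompact space, F : X → 2^Y lower α-continuous, and H : X → 2^Y a compact-valued upper semicontinuous submapping of F (H(x) ⊆ F(x) for all x). Then for any continuous positive function ε : X → ℝ there exist a continuous positive function δ : X → ℝ and an open neighbourhood U ⊆ X×Y of the graph Γ_H such that for all x ∈ X and all y ∈ F(x) ∩ U(x) one has (B(y,δ(x)) ∩ F(x)) α (B(y,ε(x)) ∩ F(x)), where U(x) = {y : (x,y) ∈ U}. -/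
open Set Metric Topology

theorem lower_alpha_continuity_along_compact_submap {X Y : Type*}
    [TopologicalSpace X] [ParacompactSpace X] [T2Space X] [MetricSpace Y]
    (α : Set Y → Set Y → Prop)
    (hα₁ : ∀ W V : Set Y, α W V → W ⊆ V)
    (hα₂ : ∀ W V R : Set Y, W ⊆ V → α V R → α W R)
    (hα₃ : ∀ W V R : Set Y, α W V → V ⊆ R → α W R)
    (F H : X → Set Y)
    (hF : ∀ x : X, ∀ y ∈ F x, ∀ V ∈ nhds y, ∃ W ∈ nhds y, ∃ U ∈ nhds x,
      ∀ x' ∈ U, α (W ∩ F x') (V ∩ F x'))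
    (hsub : ∀ x, H x ⊆ F x) (hcpt : ∀ x, IsCompact (H x)) (hne : ∀ x, (H x).Nonempty)
    (husc : ∀ x, ∀ V : Set Y, IsOpen V → H x ⊆ V →
      ∃ O ∈ nhds x, ∀ x' ∈ O, H x' ⊆ V)
    (ε : X → ℝ) (hεc : Continuous ε) (hεpos : ∀ x, 0 < ε x) :
    ∃ δ : X → ℝ, Continuous δ ∧ (∀ x, 0 < δ x) ∧
      ∃ U : Set (X × Y), IsOpen U ∧ {p : X × Y | p.2 ∈ H p.1} ⊆ U ∧
        ∀ x : X, ∀ y ∈ F x, (x, y) ∈ U →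
          α (Metric.ball y (δ x) ∩ F x) (Metric.ball y (ε x) ∩ F x) := by
  -- Step 1: pointwise on the graph of H
  have key : ∀ x₀ : X, ∀ y ∈ H x₀, ∃ r > 0, ∃ O ∈ 𝓝 x₀,
      ∀ x' ∈ O, ∀ y' ∈ ball y r, α (ball y' r ∩ F x') (ball y' (ε x') ∩ F x') := by
    intro x₀ y hy
    obtain ⟨W, hW, U, hU, hWU⟩ := hF x₀ y (hsub x₀ hy) (ball y (ε x₀ / 2))
      (ball_mem_nhds y (by linarith [hεpos x₀]))
    obtain ⟨ρ, hρ, hρW⟩ := Metric.mem_nhds_iff.1 hW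
    refine ⟨min (ρ / 2) (ε x₀ / 8), lt_min (by linarith) (by linarith [hεpos x₀]),
      U ∩ {x' | ε x₀ * (5/8) < ε x'},
      Filter.inter_mem hU ?_, ?_⟩
    · exact (hεc.continuousAt (x := x₀)).preimage_mem_nhds
        (Ioi_mem_nhds (by linarith [hεpos x₀]))
    · rintro x' ⟨hx'U, hx'ε⟩ y' hy'
      set r := min (ρ / 2) (ε x₀ / 8) with hr
      have hr₁ : r ≤ ρ / 2 := min_le_left _ _
      have hr₂ : r ≤ ε x₀ / 8 := min_le_right _ _
      have hd : dist y' y < r := mem_ball.1 hy'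
      have h1 : ball y' r ⊆ W := by
        refine Subset.trans (fun z hz => ?_) hρW
        have := mem_ball.1 hz
        exact mem_ball.2 (by
          calc dist z y ≤ dist z y' + dist y' y := dist_triangle _ _ _
            _ < r + r := by linarith
            _ ≤ ρ := by linarith)
      have hd' : dist y y' < r := by rw [dist_comm]; exact hd
      have h2 : ball y (ε x₀ / 2) ⊆ ball y' (ε x') := by
        intro z hz
        have := mem_ball.1 hz
        exact mem_ball.2 (by
          calc dist z y' ≤ dist z y + dist y y' := dist_triangle _ _ _
            _ < ε x₀ / 2 + r := by linarith
            _ ≤ ε x₀ * (5/8) := by linarith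
            _ < ε x' := hx'ε)
      exact hα₃ _ _ _ (hα₂ _ _ _ (inter_subset_inter_left _ h1) (hWU x' hx'U))
        (inter_subset_inter_left _ h2)
  -- Step 2: local version via compactness of H x₀
  have loc : ∀ x₀ : X, ∃ O : Set X, IsOpen O ∧ x₀ ∈ O ∧ ∃ G : Set Y, IsOpen G ∧
      (∀ x' ∈ O, H x' ⊆ G) ∧ ∃ c > 0,
      ∀ x' ∈ O, ∀ y ∈ G, α (ball y c ∩ F x') (ball y (ε x') ∩ F x') := by
    intro x₀
    choose r hrpos O hO hprop using key x₀
    obtain ⟨s, hscov⟩ := (hcpt x₀).elim_nhds_subcover'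
      (fun y hy => ball y (r y hy)) (fun y hy => ball_mem_nhds _ (hrpos y hy))
    have hsne : s.Nonempty := by
      rcases hne x₀ with ⟨z, hz⟩
      rcases mem_iUnion₂.1 (hscov hz) with ⟨i, _, _⟩
      exact ⟨i, by assumption⟩
    set G : Set Y := ⋃ y ∈ s, ball (y : Y) (r y (y.2)) with hG
    have hGopen : IsOpen G := isOpen_biUnion fun _ _ => isOpen_ball
    have hHG : H x₀ ⊆ G := hscov
    obtain ⟨O', hO', hO'H⟩ := husc x₀ G hGopen hHG
    set c : ℝ := s.inf' hsne (fun y => r y (y.2)) with hc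
    have hcpos : 0 < c := by
      rw [hc, Finset.lt_inf'_iff]
      exact fun y hy => hrpos _ _
    have hcle : ∀ y ∈ s, c ≤ r (y : Y) (y.2) := fun y hy => Finset.inf'_le _ hy
    refine ⟨interior (O' ∩ ⋂ y ∈ s, O y (y.2)), isOpen_interior,
      mem_interior_iff_mem_nhds.2 (Filter.inter_mem hO'
        ((Filter.biInter_finset_mem s).2 fun y hy => hO _ _)), G, hGopen, ?_, c, hcpos, ?_⟩
    · intro x' hx'
      exact hO'H x' (interior_subset hx').1
    · intro x' hx' y hyG
      rcases mem_iUnion₂.1 hyG with ⟨z, hz, hyz⟩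
      have hx'O : x' ∈ O z (z.2) := by
        have := (interior_subset hx').2
        exact (mem_iInter₂.1 this) z hz
      exact hα₂ _ _ _ (inter_subset_inter_left _ (ball_subset_ball (hcle z hz)))
        (hprop _ _ x' hx'O y hyz)
  choose O hOopen hOmem G hGopen hHG c hcpos hα using loc
  -- Step 3: precise locally finite refinement
  obtain ⟨v, hvopen, hvcov, hvlf, hvsub⟩ := precise_refinement O hOopen
    (by ext x; simpa using ⟨x, hOmem x⟩)
  -- Step 4: the open set U
  refine ?_
  set U : Set (X × Y) := ⋃ x₀, (v x₀) ×ˢ (G x₀) with hU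
  have hUopen : IsOpen U := isOpen_iUnion fun x₀ => (hvopen x₀).prod (hGopen x₀)
  have hUgraph : {p : X × Y | p.2 ∈ H p.1} ⊆ U := by
    rintro ⟨x, y⟩ hy
    have hx : x ∈ ⋃ i, v i := hvcov ▸ mem_univ x
    rcases mem_iUnion.1 hx with ⟨x₀, hx₀⟩
    exact mem_iUnion.2 ⟨x₀, hx₀, hHG x₀ x (hvsub x₀ hx₀) hy⟩
  -- Step 5: continuous δ via convex partition-of-unity selection
  have hδ : ∃ g : C(X, ℝ), ∀ x, g x ∈ {t : ℝ | 0 < t ∧ ∀ x₀, x ∈ v x₀ → t ≤ c x₀} := by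
    apply exists_continuous_forall_mem_convex_of_local_const
    · intro x
      have : {t : ℝ | 0 < t ∧ ∀ x₀, x ∈ v x₀ → t ≤ c x₀} =
          Ioi 0 ∩ ⋂ x₀ ∈ {x₀ | x ∈ v x₀}, Iic (c x₀) := by
        ext t; simp [mem_iInter]
      rw [this]
      exact ((convex_Ioi 0).inter (convex_iInter fun x₀ => convex_iInter fun _ => convex_Iic _))
    · intro x
      obtain ⟨N, hN, hNfin⟩ := hvlf x
      set T := hNfin.toFinset with hT
      set m : ℝ := (insert (1 : ℝ) (T.image c)).min' (Finset.insert_nonempty _ _) with hm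
      have hmpos : 0 < m := by
        rw [hm]
        apply (Finset.lt_min'_iff _ _).2
        intro t ht
        rcases Finset.mem_insert.1 ht with h | h
        · simp [h]
        · rcases Finset.mem_image.1 h with ⟨x₀, _, rfl⟩
          exact hcpos x₀
      refine ⟨m, Filter.eventually_of_mem hN fun y hyN => ⟨hmpos, fun x₀ hyv => ?_⟩⟩
      have hx₀T : x₀ ∈ T := by
        rw [hT, Set.Finite.mem_toFinset]
        exact ⟨y, hyv, hyN⟩
      exact Finset.min'_le _ _ (Finset.mem_insert_of_mem (Finset.mem_image_of_mem c hx₀T))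
  obtain ⟨g, hg⟩ := hδ
  refine ⟨g, g.continuous, fun x => (hg x).1, U, hUopen, hUgraph, ?_⟩
  intro x y hyF hyU
  rcases mem_iUnion.1 hyU with ⟨x₀, hxv, hyG⟩
  have h1 := hα x₀ x (hvsub x₀ hxv) y hyG
  exact hα₂ _ _ _ (inter_subset_inter_left _ (ball_subset_ball ((hg x).2 x₀ hxv))) h1
end

section
/- Let (Y,d) be a complete metric space and X a topological space. Suppose (Ψ_k : X → 2^Y)_{k≥1} is a sequence of nonempty compact-valued upper semicontinuous mappings such that for all m ≥ k ≥ 1 and all x ∈ X, Ψ_m(x) ⊆ {y : dist(y, Ψ_k(x)) < 3/2^k}, and diam Ψ_k(x) ≤ 1/2^k for all x. Then there is a singlevalued continuous mapping s : X → Y such that for each x, s(x) is the limit of the sets Ψ_k(x) in the Hausdorff sense, and s(x) is a limit point of ⋃_k Ψ_k(x). -/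
theorem cauchy_sequence_of_compact_maps_limit {X Y : Type*}
    [TopologicalSpace X] [MetricSpace Y] [CompleteSpace Y]
    (Ψ : ℕ → X → Set Y)
    (hcpt : ∀ k, 1 ≤ k → ∀ x, IsCompact (Ψ k x))
    (hne : ∀ k, 1 ≤ k → ∀ x, (Ψ k x).Nonempty)
    (husc : ∀ k, 1 ≤ k → ∀ x, ∀ V : Set Y, IsOpen V → Ψ k x ⊆ V →
      ∃ O ∈ nhds x, ∀ x' ∈ O, Ψ k x' ⊆ V)
    (happrox : ∀ m k, 1 ≤ k → k ≤ m → ∀ x, ∀ y ∈ Ψ m x,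
      Metric.infDist y (Ψ k x) < 3 / 2 ^ k)
    (hdiam : ∀ k, 1 ≤ k → ∀ x, Metric.diam (Ψ k x) ≤ 1 / 2 ^ k) :
    ∃ s : X → Y, Continuous s ∧ ∀ x : X,
      Filter.Tendsto (fun k => Metric.hausdorffDist {s x} (Ψ k x))
        Filter.atTop (nhds 0) ∧
      s x ∈ closure (⋃ k ∈ {k : ℕ | 1 ≤ k}, Ψ k x) := by
  classical
  -- choose points y k x ∈ Ψ (k+1) x
  have hsucc : ∀ k : ℕ, 1 ≤ k + 1 := fun k => Nat.succ_le_succ (Nat.zero_le k)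
  set y : ℕ → X → Y := fun k x => (hne (k + 1) (hsucc k) x).choose with hy
  have hymem : ∀ k x, y k x ∈ Ψ (k + 1) x := fun k x => (hne (k + 1) (hsucc k) x).choose_spec
  -- key distance estimate
  have hdist : ∀ x, ∀ k m : ℕ, k ≤ m → dist (y m x) (y k x) ≤ 2 / 2 ^ k := by
    intro x k m hkm
    have h1 : Metric.infDist (y m x) (Ψ (k + 1) x) < 3 / 2 ^ (k + 1) :=
      happrox (m + 1) (k + 1) (hsucc k) (Nat.succ_le_succ hkm) x _ (hymem m x)
    obtain ⟨z, hz, hdz⟩ := (hcpt (k + 1) (hsucc k) x).exists_infDist_eq_dist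
      (hne (k + 1) (hsucc k) x) (y m x)
    have h2 : dist z (y k x) ≤ 1 / 2 ^ (k + 1) :=
      le_trans (Metric.dist_le_diam_of_mem (hcpt (k + 1) (hsucc k) x).isBounded hz (hymem k x))
        (hdiam (k + 1) (hsucc k) x)
    calc dist (y m x) (y k x) ≤ dist (y m x) z + dist z (y k x) := dist_triangle _ _ _
      _ ≤ 3 / 2 ^ (k + 1) + 1 / 2 ^ (k + 1) := by
          refine add_le_add ?_ h2
          rw [← hdz]; exact h1.le
      _ = 2 / 2 ^ k := by ring
  -- Cauchy
  have hpowle : ∀ a b : ℕ, a ≤ b → ∀ c : ℝ, 0 ≤ c → c / 2 ^ b ≤ c / 2 ^ a := by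
    intro a b hab c hc
    exact div_le_div_of_nonneg_left hc (by positivity) (pow_le_pow_right₀ one_le_two hab)
  have hblim : Filter.Tendsto (fun k : ℕ => (2 : ℝ) / 2 ^ k) Filter.atTop (nhds 0) := by
    simpa using Filter.Tendsto.const_div_atTop
      (tendsto_pow_atTop_atTop_of_one_lt (by norm_num : (1:ℝ) < 2)) 2
  have hcauchy : ∀ x, CauchySeq (fun k => y k x) := by
    intro x
    refine cauchySeq_of_le_tendsto_0 (fun k => 2 / 2 ^ k) (fun n m N hn hm => ?_) hblim
    rcases le_total n m with h | h
    · exact le_trans (dist_comm (y n x) (y m x) ▸ hdist x n m h)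
        (hpowle N n hn 2 (by norm_num))
    · exact le_trans (hdist x m n h) (hpowle N m hm 2 (by norm_num))
  choose s hs using fun x => cauchySeq_tendsto_of_complete (hcauchy x)
  -- distance from s x to y k x
  have hsy : ∀ x k, dist (s x) (y k x) ≤ 2 / 2 ^ k := by
    intro x k
    have : Filter.Tendsto (fun m => dist (y m x) (y k x)) Filter.atTop
        (nhds (dist (s x) (y k x))) := (Filter.Tendsto.dist (hs x) tendsto_const_nhds)
    refine le_of_tendsto this ?_
    filter_upwards [Filter.eventually_ge_atTop k] with m hm using hdist x k m hm
  refine ⟨s, ?_, fun x => ⟨?_, ?_⟩⟩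
  · -- continuity
    rw [continuous_iff_continuousAt]
    intro x
    rw [ContinuousAt, Metric.tendsto_nhds]
    intro ε hε
    obtain ⟨k, hk⟩ := pow_unbounded_of_one_lt (y := (2:ℝ)) (8 / ε) (by norm_num)
    have h2k : (0:ℝ) < 2 ^ k := by positivity
    have hkε : 8 / 2 ^ k < ε := by
      rw [div_lt_iff₀ h2k]
      calc (8:ℝ) = (8/ε) * ε := by field_simp
        _ < 2 ^ k * ε := by gcongr
        _ = ε * 2 ^ k := by ring
    -- USC neighborhood
    set V : Set Y := {z | Metric.infDist z (Ψ (k + 1) x) < 1 / 2 ^ k} with hV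
    have hVopen : IsOpen V := by
      have : Continuous fun z => Metric.infDist z (Ψ (k + 1) x) :=
        Metric.continuous_infDist_pt _
      exact isOpen_lt this continuous_const
    have hVsub : Ψ (k + 1) x ⊆ V := fun z hz => by
      simp only [hV, Set.mem_setOf_eq, Metric.infDist_zero_of_mem hz]
      positivity
    obtain ⟨O, hO, hOV⟩ := husc (k + 1) (hsucc k) x V hVopen hVsub
    filter_upwards [hO] with x' hx'
    have h1 : Metric.infDist (y k x') (Ψ (k + 1) x) < 1 / 2 ^ k := hOV x' hx' (hymem k x')
    obtain ⟨z, hz, hdz⟩ := (Metric.infDist_lt_iff (hne (k+1) (hsucc k) x)).mp h1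
    have h2 : dist z (y k x) ≤ 1 / 2 ^ (k + 1) :=
      le_trans (Metric.dist_le_diam_of_mem (hcpt (k + 1) (hsucc k) x).isBounded hz (hymem k x))
        (hdiam (k + 1) (hsucc k) x)
    calc dist (s x') (s x)
        ≤ dist (s x') (y k x') + dist (y k x') z + dist z (y k x) + dist (y k x) (s x) := by
          have := dist_triangle4 (s x') (y k x') z (s x)
          have h4 := dist_triangle z (y k x) (s x)
          linarith [dist_triangle4 (s x') (y k x') z (s x), dist_triangle z (y k x) (s x)]
      _ ≤ 2 / 2 ^ k + 1 / 2 ^ k + 1 / 2 ^ (k + 1) + 2 / 2 ^ k :=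
          add_le_add (add_le_add (add_le_add (hsy x' k) hdz.le) h2)
            (by rw [dist_comm]; exact hsy x k)
      _ = (11 / 2) / 2 ^ k := by rw [pow_succ]; field_simp; ring
      _ ≤ 8 / 2 ^ k := by gcongr <;> norm_num
      _ < ε := hkε
  · -- Hausdorff distance tends to 0
    have hbound : ∀ k : ℕ,
        Metric.hausdorffDist {s x} (Ψ (k + 1) x) ≤ 3 / 2 ^ k := by
      intro k
      refine Metric.hausdorffDist_le_of_infDist (by positivity) ?_ ?_
      · intro z hz
        simp only [Set.mem_singleton_iff] at hz
        subst hz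
        calc Metric.infDist (s x) (Ψ (k+1) x) ≤ dist (s x) (y k x) :=
              Metric.infDist_le_dist_of_mem (hymem k x)
          _ ≤ 2 / 2 ^ k := hsy x k
          _ ≤ 3 / 2 ^ k := by gcongr <;> norm_num
      · intro z hz
        rw [Metric.infDist_singleton]
        calc dist z (s x) ≤ dist z (y k x) + dist (y k x) (s x) := dist_triangle _ _ _
          _ ≤ 1 / 2 ^ (k + 1) + 2 / 2 ^ k := by
              refine add_le_add ?_ (by rw [dist_comm]; exact hsy x k)
              exact le_trans (Metric.dist_le_diam_of_mem
                (hcpt (k + 1) (hsucc k) x).isBounded hz (hymem k x))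
                (hdiam (k + 1) (hsucc k) x)
          _ ≤ 3 / 2 ^ k := by
              have hkey : (1:ℝ) / 2 ^ (k+1) ≤ 1 / 2 ^ k := hpowle k (k+1) (Nat.le_succ k) 1 (by norm_num)
              have e : (3:ℝ) / 2 ^ k = 1 / 2 ^ k + 2 / 2 ^ k := by ring
              linarith
    have h6lim : Filter.Tendsto (fun k : ℕ => (6 : ℝ) / 2 ^ k) Filter.atTop (nhds 0) := by
      simpa using Filter.Tendsto.const_div_atTop
        (tendsto_pow_atTop_atTop_of_one_lt (by norm_num : (1:ℝ) < 2)) 6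
    refine squeeze_zero' ?_ ?_ h6lim
    · filter_upwards with k using Metric.hausdorffDist_nonneg
    · filter_upwards [Filter.eventually_ge_atTop 1] with k hk
      obtain ⟨j, rfl⟩ := Nat.exists_eq_add_of_le hk
      have := hbound j
      calc Metric.hausdorffDist {s x} (Ψ (1 + j) x)
          = Metric.hausdorffDist {s x} (Ψ (j + 1) x) := by rw [Nat.add_comm]
        _ ≤ 3 / 2 ^ j := hbound j
        _ ≤ 6 / 2 ^ (1 + j) := by
            rw [pow_add, pow_one]
            have : (0:ℝ) < 2 ^ j := by positivity
            rw [div_le_div_iff₀ this (by positivity)]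
            ring_nf
            nlinarith
  · -- closure membership
    refine mem_closure_of_tendsto (hs x) ?_
    filter_upwards with k
    exact Set.mem_biUnion (hsucc k) (hymem k x)
end
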